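/- arXiv:1207.6760 — 6 statements merged into one kernel-verified Lean document; each statement's English description precedes it below -/
import Mathlib

section
/- In the zero-sum minority game with N players, utilities U(T,k_T) for active players strictly decreasing in the number k_T of active players, U(S,k_S) = -U(T,k_T), and a threshold Ψ with U(T,Ψ)=0, the strategy profile in which exactly Ψ players play T is a pure Nash equilibrium, and every pure Nash equilibrium has exactly Ψ players playing T. -/
/-- Zero-sum minority game: exactly `Ψ` active players is a pure Nash equilibrium,
and every pure Nash equilibrium has exactly `Ψ` active players.
`U k` is the utility of an active player when `k` players are active; silent
players get `-U k`.  A profile with `k` active players is a pure NE iff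
`(k < N → -(U k) ≥ U (k+1))` and `(1 ≤ k → -(U (k-1)) ≤ U k)`. -/
theorem stmt0 (N Ψ : ℕ) (U : ℕ → ℝ)
    (hU : StrictAntiOn U (Set.Iic N))
    (hΨ1 : 1 ≤ Ψ) (hΨN : Ψ < N) (hΨ0 : U Ψ = 0) :
    ((Ψ < N → -(U Ψ) ≥ U (Ψ + 1)) ∧ (1 ≤ Ψ → -(U (Ψ - 1)) ≤ U Ψ)) ∧
    ∀ k ≤ N, ((k < N → -(U k) ≥ U (k + 1)) ∧ (1 ≤ k → -(U (k - 1)) ≤ U k)) → k = Ψ := by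
  have hΨle : Ψ ∈ Set.Iic N := le_of_lt hΨN
  constructor
  · constructor
    · intro h
      have : U (Ψ + 1) < U Ψ := hU hΨle (by simpa using hΨN) (Nat.lt_succ_self _)
      linarith
    · intro h
      have : U Ψ < U (Ψ - 1) :=
        hU (by simp; omega) hΨle (by omega)
      linarith
  · intro k hk hNE
    by_contra hne
    rcases lt_or_gt_of_ne hne with hlt | hgt
    · -- k < Ψ : U k > 0, and U (k+1) ≥ 0
      have h1 : 0 < U k := by
        have := hU (by simp; omega) hΨle hlt
        linarith
      have h2 : 0 ≤ U (k + 1) := by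
        rcases eq_or_lt_of_le (Nat.succ_le_of_lt hlt) with he | hl
        · rw [show k+1 = Ψ from he, hΨ0]
        · have := hU (by simp; omega) hΨle hl
          linarith
      have := hNE.1 (by omega)
      linarith
    · -- k > Ψ : U k < 0, U (k-1) ≤ 0
      have h1 : U k < 0 := by
        have := hU hΨle hk hgt
        linarith
      have h2 : U (k - 1) ≤ 0 := by
        rcases eq_or_lt_of_le (Nat.le_sub_one_of_lt hgt) with he | hl
        · rw [← he, hΨ0]
        · have := hU hΨle (by simp; omega) hl
          linarith
      have := hNE.2 (by omega)
      linarith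
end

section
/- In the fixed-regret minority game with N players, where active players receive U(T,k_T) strictly decreasing in k_T, silent players receive constant utility -α with α ≥ 0, and k_T^α is defined by U(T,k_T^α) = -α, a profile with k_T active players is a pure Nash equilibrium if and only if k_T ∈ {k_T^α, k_T^α - 1}. -/
/-- Fixed-regret minority game: a profile with `k` active players is a pure Nash
equilibrium iff `k ∈ {kα, kα - 1}`, where `U kα = -α`.  Active players get
`U k`, silent players get the constant `-α` (α ≥ 0).  NE conditions:
`(k < N → -α ≥ U (k+1))` and `(1 ≤ k → -α ≤ U k)`. -/
theorem stmt1 (N kα : ℕ) (α : ℝ) (U : ℕ → ℝ)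
    (hU : StrictAntiOn U (Set.Iic N))
    (hα : 0 ≤ α) (hk1 : 1 ≤ kα) (hkN : kα < N) (hkα : U kα = -α) :
    ∀ k ≤ N, (((k < N → -α ≥ U (k + 1)) ∧ (1 ≤ k → -α ≤ U k)) ↔
      (k = kα ∨ k = kα - 1)) := by
  intro k hkNle
  have hkαN : kα ∈ Set.Iic N := le_of_lt hkN
  constructor
  · rintro ⟨h1, h2⟩
    by_contra hc
    push_neg at hc
    obtain ⟨hne1, hne2⟩ := hc
    rcases lt_or_gt_of_ne hne1 with hlt | hgt
    · -- k < kα, and k ≠ kα - 1 so k + 1 < kα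
      have hk1lt : k + 1 < kα := by omega
      have hkN' : k < N := by omega
      have := h1 hkN'
      have hUgt : U kα < U (k + 1) := hU (by simp; omega) hkαN hk1lt
      rw [hkα] at hUgt
      linarith
    · -- k > kα ≥ 1
      have := h2 (by omega)
      have hUlt : U k < U kα := hU hkαN (by simpa using hkNle) hgt
      rw [hkα] at hUlt
      linarith
  · rintro (rfl | rfl)
    · refine ⟨fun hN => ?_, fun _ => le_of_eq hkα.symm⟩
      have : U (k + 1) < U k := hU hkαN (by simpa using hN) (by omega)
      rw [hkα] at this
      linarith
    · constructor
      · intro _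
        have h : kα - 1 + 1 = kα := by omega
        rw [h, hkα]
      · intro h1
        have : U kα < U (kα - 1) := hU (by simp; omega) hkαN (by omega)
        rw [hkα] at this
        linarith
end

section
/- In the symmetric minority game, at any mixed Nash equilibrium where players i and j both use strictly mixed strategies (activation probabilities in (0,1)), the two players use the same activation probability: p_i = p_j. -/
lemma key_expand {N : ℕ} (U : ℕ → ℝ) (p : Fin N → ℝ) (j : Fin N)
    (R : Finset (Fin N)) (hjR : j ∉ R) :
    ∑ S ∈ (insert j R).powerset,
        (∏ k ∈ S, p k) * (∏ k ∈ (insert j R) \ S, (1 - p k)) * U (S.card + 1)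
    = ∑ S ∈ R.powerset, (∏ k ∈ S, p k) * (∏ k ∈ R \ S, (1 - p k)) *
        ((1 - p j) * U (S.card + 1) + p j * U (S.card + 2)) := by
  rw [Finset.sum_powerset_insert hjR, ← Finset.sum_add_distrib]
  refine Finset.sum_congr rfl fun S hS => ?_
  have hSR : S ⊆ R := Finset.mem_powerset.1 hS
  have hjS : j ∉ S := fun h => hjR (hSR h)
  have h1 : (insert j R) \ S = insert j (R \ S) := by
    ext x; simp only [Finset.mem_sdiff, Finset.mem_insert]
    constructor
    · rintro ⟨(rfl | hx), hxs⟩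
      · exact Or.inl rfl
      · exact Or.inr ⟨hx, hxs⟩
    · rintro (rfl | ⟨hx, hxs⟩)
      · exact ⟨Or.inl rfl, hjS⟩
      · exact ⟨Or.inr hx, hxs⟩
  have h2 : (insert j R) \ (insert j S) = R \ S := by
    ext x; simp only [Finset.mem_sdiff, Finset.mem_insert, not_or]
    constructor
    · rintro ⟨(rfl | hx), hne, hxs⟩
      · exact absurd rfl hne
      · exact ⟨hx, hxs⟩
    · rintro ⟨hx, hxs⟩
      exact ⟨Or.inr hx, fun h => hjR (h ▸ hx), hxs⟩
  have hjRS : j ∉ R \ S := fun h => hjR (Finset.mem_sdiff.1 h).1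
  rw [h1, h2, Finset.prod_insert hjRS, Finset.prod_insert hjS,
    Finset.card_insert_of_notMem hjS]
  ring

/-- Symmetric minority game: at a mixed Nash equilibrium, any two mixers use the
same activation probability.  `W p i` is the expected marginal utility of player
`i` being active when the opponents activate independently with probabilities
`p j`; at equilibrium each mixer `i` satisfies `W p i = 0`. -/
theorem stmt4 (N : ℕ) (U : ℕ → ℝ) (hU : StrictAnti U)
    (W : (Fin N → ℝ) → Fin N → ℝ)
    (hW : ∀ p i, W p i =
      ∑ S ∈ (Finset.univ.erase i).powerset,
        (∏ j ∈ S, p j) * (∏ j ∈ (Finset.univ.erase i) \ S, (1 - p j)) * U (S.card + 1))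
    (p : Fin N → ℝ) (hp : ∀ k, p k ∈ Set.Icc (0 : ℝ) 1)
    (i j : Fin N)
    (hi : p i ∈ Set.Ioo (0 : ℝ) 1) (hj : p j ∈ Set.Ioo (0 : ℝ) 1)
    (hWi : W p i = 0) (hWj : W p j = 0) :
    p i = p j := by
  rcases eq_or_ne i j with rfl | hij
  · rfl
  set R : Finset (Fin N) := (Finset.univ.erase i).erase j with hRdef
  have hjR : j ∉ R := Finset.notMem_erase _ _
  have hiR : i ∉ R := fun h =>
    Finset.notMem_erase i Finset.univ (Finset.mem_of_mem_erase h)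
  have hinsj : (Finset.univ.erase i) = insert j R := by
    rw [hRdef, Finset.insert_erase (Finset.mem_erase.2 ⟨Ne.symm hij, Finset.mem_univ _⟩)]
  have hinsi : (Finset.univ.erase j) = insert i R := by
    rw [hRdef, Finset.erase_right_comm,
      Finset.insert_erase (Finset.mem_erase.2 ⟨hij, Finset.mem_univ _⟩)]
  have hWi' : ∑ S ∈ R.powerset, (∏ k ∈ S, p k) * (∏ k ∈ R \ S, (1 - p k)) *
      ((1 - p j) * U (S.card + 1) + p j * U (S.card + 2)) = 0 := by
    rw [← key_expand U p j R hjR, ← hinsj, ← hW]; exact hWi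
  have hWj' : ∑ S ∈ R.powerset, (∏ k ∈ S, p k) * (∏ k ∈ R \ S, (1 - p k)) *
      ((1 - p i) * U (S.card + 1) + p i * U (S.card + 2)) = 0 := by
    rw [← key_expand U p i R hiR, ← hinsi, ← hW]; exact hWj
  -- difference
  have hdiff : (p j - p i) * ∑ S ∈ R.powerset,
      (∏ k ∈ S, p k) * (∏ k ∈ R \ S, (1 - p k)) * (U (S.card + 2) - U (S.card + 1)) = 0 := by
    have := sub_eq_zero_of_eq (hWi'.trans hWj'.symm)
    rw [← Finset.sum_sub_distrib] at this
    rw [Finset.mul_sum, ← this]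
    exact Finset.sum_congr rfl fun S _ => by ring
  have hpinn : ∀ S ∈ R.powerset, (0:ℝ) ≤ (∏ k ∈ S, p k) * (∏ k ∈ R \ S, (1 - p k)) :=
    fun S _ => mul_nonneg (Finset.prod_nonneg fun k _ => (hp k).1)
      (Finset.prod_nonneg fun k _ => by linarith [(hp k).2])
  have hsum1 : ∑ S ∈ R.powerset, (∏ k ∈ S, p k) * (∏ k ∈ R \ S, (1 - p k)) = 1 := by
    rw [← Finset.prod_add]
    exact Finset.prod_eq_one fun k _ => by ring
  have hDne : ∑ S ∈ R.powerset,
      (∏ k ∈ S, p k) * (∏ k ∈ R \ S, (1 - p k)) * (U (S.card + 2) - U (S.card + 1)) ≠ 0 := by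
    intro hD0
    have hterm : ∀ S ∈ R.powerset,
        (∏ k ∈ S, p k) * (∏ k ∈ R \ S, (1 - p k)) * (U (S.card + 2) - U (S.card + 1)) ≤ 0 :=
      fun S hS => mul_nonpos_of_nonneg_of_nonpos (hpinn S hS)
        (by linarith [hU (Nat.lt_succ_self (S.card + 1))])
    have hzero := (Finset.sum_eq_zero_iff_of_nonpos hterm).1 hD0
    have : ∑ S ∈ R.powerset, (∏ k ∈ S, p k) * (∏ k ∈ R \ S, (1 - p k)) = 0 := by
      refine Finset.sum_eq_zero fun S hS => ?_
      have h := hzero S hS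
      rcases mul_eq_zero.1 h with h' | h'
      · exact h'
      · exact absurd h' (sub_ne_zero.2 (ne_of_lt (hU (Nat.lt_succ_self (S.card + 1)))))
    rw [hsum1] at this
    exact one_ne_zero this
  have := (mul_eq_zero.1 hdiff).resolve_right hDne
  linarith [sub_eq_zero.1 this]
end

section
/- In the heterogeneous user-cost minority game, the function Θ(g) = Σ_{k=0}^{N-1} C(N-1,k) F(g)^k (1−F(g))^{N−1−k} [r·P(k+1) − gτ] is strictly decreasing in g, satisfies Θ(g) > 0 for g near 0 and Θ(g) < 0 for g near r·P(1)/τ (assuming F strictly increasing with F(0)=0), and hence admits a unique zero g_th ∈ (0, r·P(1)/τ). -/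
/-!
Write `K ∼ Binomial(N - 1, F g)` for the number of other active relays. Then
`Θ g = 𝔼[r P(K + 1)] - g τ`. The mean `B_n c x = 𝔼[c K]` for `K ∼ Binomial(n, x)` (written
with Bernstein polynomials) obeys `B_{n+1} c x = (1 - x) B_n c x + x B_n (c ∘ succ) x`. For
antitone `c` this convex combination puts more weight on the smaller mean `B_n (c ∘ succ)` as `x`
grows, so by induction `B_n c` is antitone on `[0, 1]`; as `F` is monotone, `Θ` is strictly
decreasing. At `g = 0` only `K = 0` occurs and `Θ 0 = r P(1) > 0`; at `g = r P(1) / τ` we have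
`F g > 0`, so `K ≥ 1` has positive probability and `𝔼[r P(K + 1)] < r P(1) = g τ`. The unique
zero comes from the intermediate value theorem.
-/

open Finset Polynomial

theorem bernsteinPolynomial.succ_succ (R : Type*) [CommRing R] (n k : ℕ) :
    bernsteinPolynomial R (n + 1) (k + 1) =
      X * bernsteinPolynomial R n k + (1 - X) * bernsteinPolynomial R n (k + 1) := by
  simp only [bernsteinPolynomial]
  rw [Nat.succ_sub_succ, Nat.choose_succ_succ, Nat.cast_add]
  rcases lt_or_ge n (k + 1) with h | h
  · rw [Nat.choose_eq_zero_of_lt h]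
    ring
  · rw [show n - k = n - (k + 1) + 1 by omega]
    ring

theorem bernsteinPolynomial.succ_zero (R : Type*) [CommRing R] (n : ℕ) :
    bernsteinPolynomial R (n + 1) 0 = (1 - X) * bernsteinPolynomial R n 0 := by
  simp only [bernsteinPolynomial, Nat.choose_zero_right, Nat.sub_zero]
  ring

theorem bernsteinPolynomial.eval_nonneg (n k : ℕ) {x : ℝ} (hx₀ : 0 ≤ x) (hx₁ : x ≤ 1) :
    0 ≤ (bernsteinPolynomial ℝ n k).eval x := by
  have : 0 ≤ 1 - x := by linarith
  simp only [bernsteinPolynomial, eval_mul, eval_pow, eval_sub, eval_one, eval_X, eval_natCast]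
  positivity

noncomputable def binomialMean (n : ℕ) (c : ℕ → ℝ) (x : ℝ) : ℝ :=
  ∑ k ∈ range (n + 1), c k * (bernsteinPolynomial ℝ n k).eval x

theorem binomialMean_eq_sum (n : ℕ) (c : ℕ → ℝ) (x : ℝ) :
    binomialMean n c x =
      ∑ k ∈ range (n + 1), (n.choose k : ℝ) * x ^ k * (1 - x) ^ (n - k) * c k := by
  simp only [binomialMean, bernsteinPolynomial, eval_mul, eval_pow, eval_sub, eval_one, eval_X,
    eval_natCast, mul_comm (c _)]

theorem binomialMean_const (n : ℕ) (d x : ℝ) : binomialMean n (fun _ => d) x = d := by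
  rw [binomialMean, ← mul_sum, ← eval_finsetSum, bernsteinPolynomial.sum, eval_one, mul_one]

theorem binomialMean_sub (n : ℕ) (c d : ℕ → ℝ) (x : ℝ) :
    binomialMean n (fun k => c k - d k) x = binomialMean n c x - binomialMean n d x := by
  simp only [binomialMean, sub_mul, sum_sub_distrib]

theorem binomialMean_at_zero (n : ℕ) (c : ℕ → ℝ) : binomialMean n c 0 = c 0 := by
  simp [binomialMean, bernsteinPolynomial.eval_at_0]

theorem binomialMean_succ (n : ℕ) (c : ℕ → ℝ) (x : ℝ) :
    binomialMean (n + 1) c x =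
      (1 - x) * binomialMean n c x + x * binomialMean n (fun k => c (k + 1)) x := by
  have hreindex : binomialMean n c x =
      ∑ k ∈ range (n + 1), c (k + 1) * (bernsteinPolynomial ℝ n (k + 1)).eval x
        + c 0 * (bernsteinPolynomial ℝ n 0).eval x := by
    rw [binomialMean, ← sum_range_succ' (fun k => c k * (bernsteinPolynomial ℝ n k).eval x),
      sum_range_succ _ (n + 1), bernsteinPolynomial.eq_zero_of_lt ℝ (Nat.lt_succ_self n),
      eval_zero, mul_zero, add_zero]
  rw [hreindex, binomialMean, binomialMean, sum_range_succ', mul_add, mul_sum, mul_sum,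
    add_right_comm, ← sum_add_distrib]
  simp only [bernsteinPolynomial.succ_succ, bernsteinPolynomial.succ_zero, eval_add, eval_mul,
    eval_sub, eval_one, eval_X]
  congr 1
  · exact sum_congr rfl fun k _ => by ring
  · ring

theorem binomialMean_mono {c d : ℕ → ℝ} (h : ∀ k, c k ≤ d k) (n : ℕ) {x : ℝ}
    (hx₀ : 0 ≤ x) (hx₁ : x ≤ 1) : binomialMean n c x ≤ binomialMean n d x :=
  sum_le_sum fun k _ =>
    mul_le_mul_of_nonneg_right (h k) (bernsteinPolynomial.eval_nonneg n k hx₀ hx₁)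

theorem antitoneOn_binomialMean {c : ℕ → ℝ} (hc : Antitone c) (n : ℕ) :
    AntitoneOn (binomialMean n c) (Set.Icc 0 1) := by
  induction n generalizing c with
  | zero => intro x _ y _ _; simp [binomialMean, bernsteinPolynomial]
  | succ n ih =>
    intro x hx y hy hxy
    have hshift : Antitone fun k => c (k + 1) := fun k l hkl => hc (by omega)
    have hA := ih hc hx hy hxy
    have hS := ih hshift hx hy hxy
    have hSA := binomialMean_mono (fun k => hc k.le_succ) n hx.1 hx.2
    rw [binomialMean_succ, binomialMean_succ]
    nlinarith [hy.1, hy.2]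

theorem binomialMean_succ_lt_apply_zero {c : ℕ → ℝ} (hc : Antitone c) (h₁₀ : c 1 < c 0)
    (n : ℕ) {x : ℝ} (hx₀ : 0 < x) (hx₁ : x ≤ 1) : binomialMean (n + 1) c x < c 0 := by
  have hx : x ∈ Set.Icc (0 : ℝ) 1 := ⟨hx₀.le, hx₁⟩
  have h0 : (0 : ℝ) ∈ Set.Icc (0 : ℝ) 1 := ⟨le_rfl, zero_le_one⟩
  have hA := antitoneOn_binomialMean hc n h0 hx hx₀.le
  have hS := antitoneOn_binomialMean (fun k l hkl => hc (by omega : k + 1 ≤ l + 1)) n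
    h0 hx hx₀.le
  rw [binomialMean_at_zero] at hA hS
  rw [binomialMean_succ]
  nlinarith

theorem continuous_binomialMean (n : ℕ) (c : ℕ → ℝ) : Continuous (binomialMean n c) := by
  unfold binomialMean
  fun_prop

theorem existsUnique_zero_of_strictAntiOn {f : ℝ → ℝ} {a b : ℝ} (hab : a ≤ b)
    (hf : StrictAntiOn f (Set.Icc a b)) (hfc : ContinuousOn f (Set.Icc a b))
    (ha : 0 < f a) (hb : f b < 0) : ∃! x, x ∈ Set.Ioo a b ∧ f x = 0 := by
  obtain ⟨x, hx, hfx⟩ := intermediate_value_Ioo' hab hfc ⟨hb, ha⟩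
  exact ⟨x, ⟨hx, hfx⟩, fun y ⟨hy, hfy⟩ =>
    hf.injOn (Set.Ioo_subset_Icc_self hy) (Set.Ioo_subset_Icc_self hx) (hfy.trans hfx.symm)⟩

/-- User-dependent heterogeneous cost game: the expected utility of activation
`Θ(g) = ∑_{k=0}^{N-1} C(N-1,k) F(g)^k (1−F(g))^{N−1−k} (r P(k+1) − gτ)` is
strictly decreasing in `g`, positive at `g = 0`, negative at `g = r P(1)/τ`,
and hence has a unique zero `g_th ∈ (0, r P(1)/τ)`. -/
theorem stmt7 (N : ℕ) (hN : 2 ≤ N) (F : ℝ → ℝ)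
    (hFmono : StrictMonoOn F (Set.Ici 0)) (hF0 : F 0 = 0)
    (hF1 : ∀ g, F g ≤ 1) (hFc : ContinuousOn F (Set.Ici 0))
    (P : ℕ → ℝ) (hP : StrictAntiOn P (Set.Icc 1 N))
    (hPpos : ∀ k ∈ Set.Icc 1 N, 0 < P k)
    (r τ : ℝ) (hr : 0 < r) (hτ : 0 < τ)
    (Θ : ℝ → ℝ)
    (hΘ : ∀ g, Θ g = ∑ k ∈ Finset.range N,
      ((N - 1).choose k : ℝ) * (F g) ^ k * (1 - F g) ^ (N - 1 - k) *
        (r * P (k + 1) - g * τ)) :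
    StrictAntiOn Θ (Set.Icc 0 (r * P 1 / τ)) ∧
    0 < Θ 0 ∧ Θ (r * P 1 / τ) < 0 ∧
    ∃! g : ℝ, g ∈ Set.Ioo 0 (r * P 1 / τ) ∧ Θ g = 0 := by
  obtain ⟨n, rfl⟩ : ∃ n, N = n + 2 := ⟨N - 2, by omega⟩
  -- `P` is only specified on `1, …, N`; clamping makes the payoff sequence antitone on `ℕ`.
  set c : ℕ → ℝ := fun k => r * P (min (k + 1) (n + 2))
  have hc : Antitone c := fun k l hkl =>
    mul_le_mul_of_nonneg_left (hP.antitoneOn ⟨by omega, by omega⟩ ⟨by omega, by omega⟩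
      (by omega)) hr.le
  have hc₁₀ : c 1 < c 0 := by
    simpa [c] using
      mul_lt_mul_of_pos_left (hP ⟨le_rfl, by omega⟩ ⟨by omega, by omega⟩ one_lt_two) hr
  have hΘc : ∀ g, Θ g = binomialMean (n + 1) c (F g) - g * τ := fun g => by
    rw [← binomialMean_const (n + 1) (g * τ) (F g), ← binomialMean_sub, hΘ,
      binomialMean_eq_sum]
    refine sum_congr rfl fun k hk => ?_
    simp only [c, min_eq_left (by simpa using hk : k + 1 ≤ n + 2),
      show n + 2 - 1 = n + 1 from rfl]
  have hFI : Set.MapsTo F (Set.Ici 0) (Set.Icc 0 1) := fun g hg =>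
    ⟨hF0 ▸ hFmono.monotoneOn Set.self_mem_Ici hg hg, hF1 g⟩
  set G := r * P 1 / τ
  have hG : 0 < G := div_pos (mul_pos hr (hPpos 1 ⟨le_rfl, by omega⟩)) hτ
  have hanti : StrictAntiOn Θ (Set.Icc 0 G) := fun x hx y hy hxy => by
    have := antitoneOn_binomialMean hc (n + 1) (hFI hx.1) (hFI hy.1)
      (hFmono.monotoneOn hx.1 hy.1 hxy.le)
    rw [hΘc, hΘc]
    nlinarith
  have hΘ₀ : 0 < Θ 0 := by
    rw [hΘc, hF0, binomialMean_at_zero]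
    simpa [c] using mul_pos hr (hPpos 1 ⟨le_rfl, by omega⟩)
  have hΘG : Θ G < 0 := by
    have := binomialMean_succ_lt_apply_zero hc hc₁₀ n
      (hF0 ▸ hFmono Set.self_mem_Ici hG.le hG) (hF1 G)
    rw [hΘc, div_mul_cancel₀ _ hτ.ne']
    simpa [c] using this
  refine ⟨hanti, hΘ₀, hΘG, existsUnique_zero_of_strictAntiOn hG.le hanti ?_ hΘ₀ hΘG⟩
  rw [funext hΘc]
  exact ((continuous_binomialMean _ c).comp_continuousOn (hFc.mono fun g hg => hg.1)).sub
    (by fun_prop)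
end

section
/- In the mixer/non-mixer minority game, a profile (l, r, p*) with l pure-T players, r pure-S players, and the remaining N−l−r players mixing with common probability p* ∈ (0,1) is a Nash equilibrium if and only if v_T(l+1, r, p*) = v_S(l, r+1, p*), where v_T and v_S are the expected payoffs of playing T and S respectively. -/
open Finset in
lemma aux_mono (U : ℕ → ℝ) (hU : StrictAnti U) (p : ℝ) (hp0 : 0 ≤ p) (hp1 : p ≤ 1)
    (m a b : ℕ) (hab : a ≤ b) :
    ∑ k ∈ Finset.range (m+1), (m.choose k : ℝ) * p ^ k * (1-p) ^ (m-k) * U (b+k)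
    ≤ ∑ k ∈ Finset.range (m+1), (m.choose k : ℝ) * p ^ k * (1-p) ^ (m-k) * U (a+k) := by
  apply Finset.sum_le_sum
  intro k _
  have hq : (0:ℝ) ≤ 1 - p := by linarith
  have hw : (0:ℝ) ≤ (m.choose k : ℝ) * p ^ k * (1-p) ^ (m-k) :=
    mul_nonneg (mul_nonneg (by positivity) (pow_nonneg hp0 _)) (pow_nonneg hq _)
  have hUk : U (b+k) ≤ U (a+k) := hU.antitone (by omega)
  exact mul_le_mul_of_nonneg_left hUk hw

open Finset in
lemma aux_pascal (U : ℕ → ℝ) (p : ℝ) (m a : ℕ) :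
    ∑ k ∈ Finset.range (m+1+1), ((m+1).choose k : ℝ) * p ^ k * (1-p) ^ (m+1-k) * U (a+k)
    = p * ∑ k ∈ Finset.range (m+1), (m.choose k : ℝ) * p ^ k * (1-p) ^ (m-k) * U (a+1+k)
    + (1-p) * ∑ k ∈ Finset.range (m+1), (m.choose k : ℝ) * p ^ k * (1-p) ^ (m-k) * U (a+k) := by
  rw [Finset.sum_range_succ'
    (fun k => ((m+1).choose k : ℝ) * p ^ k * (1-p) ^ (m+1-k) * U (a+k)) (m+1)]
  have step : ∀ k ∈ Finset.range (m+1),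
      ((m+1).choose (k+1) : ℝ) * p ^ (k+1) * (1-p) ^ (m+1-(k+1)) * U (a+(k+1))
      = p * ((m.choose k : ℝ) * p ^ k * (1-p) ^ (m-k) * U (a+1+k))
        + (m.choose (k+1) : ℝ) * p ^ (k+1) * (1-p) ^ (m-k) * U (a+(k+1)) := by
    intro k hk
    have : (m+1).choose (k+1) = m.choose k + m.choose (k+1) := Nat.choose_succ_succ m k
    rw [this]
    push_cast
    have h2 : a+1+k = a+(k+1) := by omega
    rw [h2]
    ring
  rw [Finset.sum_congr rfl step, Finset.sum_add_distrib, ← Finset.mul_sum]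
  -- remaining: handle second sum + boundary term
  have hsec : ∑ k ∈ Finset.range (m+1),
      (m.choose (k+1) : ℝ) * p ^ (k+1) * (1-p) ^ (m-k) * U (a+(k+1))
      = ∑ k ∈ Finset.range m,
      (m.choose (k+1) : ℝ) * p ^ (k+1) * (1-p) ^ (m-(k+1)+1) * U (a+(k+1)) := by
    rw [Finset.sum_range_succ]
    simp [Nat.choose_succ_self]
    apply Finset.sum_congr rfl
    intro k hk
    have : m - k = m-(k+1)+1 := by simp at hk; omega
    rw [this]
  rw [hsec]
  have hrhs : (1-p) * ∑ k ∈ Finset.range (m+1),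
      (m.choose k : ℝ) * p ^ k * (1-p) ^ (m-k) * U (a+k)
      = ∑ k ∈ Finset.range m,
        (m.choose (k+1) : ℝ) * p ^ (k+1) * (1-p) ^ (m-(k+1)+1) * U (a+(k+1))
      + (1-p) ^ (m+1) * U a := by
    rw [Finset.sum_range_succ'
      (fun k => (m.choose k : ℝ) * p ^ k * (1-p) ^ (m-k) * U (a+k)) m,
      mul_add, Finset.mul_sum]
    congr 1
    · apply Finset.sum_congr rfl
      intro k hk
      rw [pow_succ]
      ring
    · simp
      ring
  rw [hrhs]
  simp
  ring

/-- Mixer/non-mixer zero-sum minority game: a profile `(l, r, p)` with `l` pure-T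
players, `r` pure-S players, and the remaining `N − l − r ≥ 1` players mixing
with common probability `p ∈ (0,1)` is a Nash equilibrium if and only if
`v_T(l+1, r, p) = v_S(l, r+1, p)`, where
`v_T(l,r,p) = ∑_k C(N−l−r,k) p^k (1−p)^{N−l−r−k} U(l+k)` and `v_S = −v_T`. -/
theorem stmt17 (N l r : ℕ) (U : ℕ → ℝ) (hU : StrictAnti U)
    (vT : ℕ → ℕ → ℝ → ℝ)
    (hvT : ∀ l r (p : ℝ), vT l r p =
      ∑ k ∈ Finset.range (N - l - r + 1),
        ((N - l - r).choose k : ℝ) * p ^ k * (1 - p) ^ (N - l - r - k) * U (l + k))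
    (p : ℝ) (hp : p ∈ Set.Ioo (0 : ℝ) 1) (hlr : l + r < N) :
    ((1 ≤ l → vT l r p ≥ -vT (l - 1) (r + 1) p) ∧
     (1 ≤ r → -vT l r p ≥ vT (l + 1) (r - 1) p) ∧
     (∀ q ∈ Set.Icc (0 : ℝ) 1,
        p * vT (l + 1) r p + (1 - p) * (-vT l (r + 1) p) ≥
        q * vT (l + 1) r p + (1 - q) * (-vT l (r + 1) p)))
    ↔ vT (l + 1) r p = -vT l (r + 1) p := by
  obtain ⟨hp0, hp1⟩ := hp
  set m := N - l - r - 1 with hm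
  -- notation for sums
  set F : ℕ → ℕ → ℝ := fun n a =>
    ∑ k ∈ Finset.range (n+1), (n.choose k : ℝ) * p ^ k * (1-p) ^ (n-k) * U (a+k) with hF
  have eA : vT (l+1) r p = F m (l+1) := by
    rw [hvT]; have : N - (l+1) - r = m := by omega
    rw [this]
  have eB : vT l (r+1) p = F m l := by
    rw [hvT]; have : N - l - (r+1) = m := by omega
    rw [this]
  constructor
  · rintro ⟨-, -, h3⟩
    have h0 := h3 0 ⟨le_refl 0, zero_le_one⟩
    have h1 := h3 1 ⟨zero_le_one, le_refl 1⟩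
    simp only [zero_mul, one_mul, sub_zero, sub_self, zero_add, add_zero] at h0 h1
    nlinarith [h0, h1, hp0, hp1]
  · intro hEq
    rw [eA, eB] at hEq
    have eLR : vT l r p = p * F m (l+1) + (1-p) * F m l := by
      rw [hvT]
      have h1 : N - l - r = m + 1 := by omega
      rw [h1]
      exact aux_pascal U p m l
    refine ⟨?_, ?_, ?_⟩
    · intro hl
      have e1 : vT (l-1) (r+1) p = p * F m l + (1-p) * F m (l-1) := by
        rw [hvT]
        have h1 : N - (l-1) - (r+1) = m + 1 := by omega
        rw [h1]
        have := aux_pascal U p m (l-1)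
        have h2 : l - 1 + 1 = l := by omega
        rw [h2] at this
        exact this
      have hmono := aux_mono U hU p hp0.le hp1.le m (l-1) (l+1) (by omega)
      rw [eLR, e1]
      simp only [ge_iff_le, neg_add, neg_mul]
      nlinarith [mul_nonneg (by linarith : (0:ℝ) ≤ 1 - p)
        (sub_nonneg.mpr hmono)]
    · intro hr
      have e2 : vT (l+1) (r-1) p = p * F m (l+2) + (1-p) * F m (l+1) := by
        rw [hvT]
        have h1 : N - (l+1) - (r-1) = m + 1 := by omega
        rw [h1]
        have := aux_pascal U p m (l+1)
        have h2 : l + 1 + 1 = l + 2 := by omega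
        rw [h2] at this
        exact this
      have hmono := aux_mono U hU p hp0.le hp1.le m l (l+2) (by omega)
      rw [eLR, e2]
      nlinarith [mul_nonneg hp0.le (sub_nonneg.mpr hmono)]
    · intro q hq
      rw [eA, eB, hEq]
      apply ge_of_eq
      ring
end

section
/- In the zero-sum minority game with mixers and non-mixers, if the number l of pure-T players satisfies l ≥ Ψ (where U(T,Ψ) = 0 and U is strictly decreasing), then no Nash equilibrium of type (l, r, p*) with at least one mixer exists. -/
/-- Zero-sum minority game with mixers and non-mixers: if the number `l` of
pure-T players satisfies `l ≥ Ψ` (where `U Ψ = 0` and `U` is strictly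
decreasing), then the indifference condition `v_T(l+1,r,p) = v_S(l,r+1,p)`
fails for every `p ∈ (0,1)`, so no Nash equilibrium of type `(l, r, p*)` with at
least one mixer exists. -/
theorem stmt18 (N l r Ψ : ℕ) (U : ℕ → ℝ) (hU : StrictAnti U) (hΨ : U Ψ = 0)
    (vT : ℕ → ℕ → ℝ → ℝ)
    (hvT : ∀ l r (p : ℝ), vT l r p =
      ∑ k ∈ Finset.range (N - l - r + 1),
        ((N - l - r).choose k : ℝ) * p ^ k * (1 - p) ^ (N - l - r - k) * U (l + k))
    (hl : Ψ ≤ l) (hlr : l + r < N) :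
    ∀ p ∈ Set.Ioo (0 : ℝ) 1, vT (l + 1) r p ≠ -vT l (r + 1) p := by
  rintro p ⟨hp0, hp1⟩ heq
  have h1p : (0:ℝ) < 1 - p := by linarith
  have h1 : vT (l + 1) r p < 0 := by
    rw [hvT]
    apply Finset.sum_neg
    · intro k hk
      have hk' : k ≤ N - (l + 1) - r := Nat.lt_succ_iff.mp (Finset.mem_range.mp hk)
      have hc : (0:ℝ) < ((N - (l + 1) - r).choose k : ℝ) := by
        exact_mod_cast Nat.choose_pos hk'
      have hU' : U (l + 1 + k) < 0 := by
        rw [← hΨ]; exact hU (by omega)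
      exact mul_neg_of_pos_of_neg
        (mul_pos (mul_pos hc (pow_pos hp0 k)) (pow_pos h1p _)) hU'
    · exact ⟨0, Finset.mem_range.mpr (Nat.succ_pos _)⟩
  have h2 : vT l (r + 1) p ≤ 0 := by
    rw [hvT]
    apply Finset.sum_nonpos
    intro k hk
    have hU' : U (l + k) ≤ 0 := by
      rw [← hΨ]; exact hU.antitone (by omega)
    exact mul_nonpos_of_nonneg_of_nonpos
      (by positivity) hU'
  linarith
end
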